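/- arXiv:2411.17039 — 4 statements merged into one kernel-verified Lean document; each statement's English description precedes it below -/
import Mathlib

section
/- Let β, c, μ, ξ, K be positive reals and C_V ≥ 0, s > 0, with β·c·μ > 1 and β·c·μ ≤ ξ + 1. Let (a_k)_{k≥1} be a sequence of nonnegative reals satisfying a_{k+1} ≤ (1 − β·c·μ/(ξ + k))·a_k + β²·K·C_V·s/(2·(ξ + k)²) for all k ≥ 1. Set κ := max{ β²·K·C_V/(2·(β·c·μ − 1)), (ξ + 1)·a₁/s }. Then a_k ≤ κ·s/(ξ + k) for all k ≥ 1. -/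
/-! The bound `a_k ≤ C/(ξ+k)` propagates by induction: if `a_k ≤ C/t` with `t = ξ+k ≥ βcμ`,
the recursion gives `a_{k+1} ≤ (1 - βcμ/t)·C/t + (βcμ - 1)·C/t² = (t-1)·C/t² ≤ C/(t+1)`,
and the choice of `κ` makes the noise term at most `(βcμ - 1)·C/t²` and the bound hold at `k = 1`. -/

lemma contraction_step_le_div_add_one {b t C D x : ℝ} (hb : 1 < b) (hbt : b ≤ t)
    (hC : 0 ≤ C) (hD : D ≤ (b - 1) * C) (hx : x ≤ C / t) :
    (1 - b / t) * x + D / t ^ 2 ≤ C / (t + 1) := by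
  have ht : 0 < t := by linarith
  have hfac : 0 ≤ 1 - b / t := by rw [sub_nonneg, div_le_one ht]; exact hbt
  calc (1 - b / t) * x + D / t ^ 2
      ≤ (1 - b / t) * (C / t) + (b - 1) * C / t ^ 2 := by gcongr
    _ = (t - 1) * C / t ^ 2 := by field_simp; ring
    _ ≤ C / (t + 1) := by
      rw [div_le_div_iff₀ (by positivity) (by positivity)]
      nlinarith [mul_nonneg hC (sq_nonneg t)]

lemma le_div_of_contraction_recursion {a : ℕ → ℝ} {b ξ C D : ℝ} (hb : 1 < b) (hbξ : b ≤ ξ + 1)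
    (hC : 0 ≤ C) (hD : D ≤ (b - 1) * C) (h1 : a 1 ≤ C / (ξ + 1))
    (hrec : ∀ k ≥ 1, a (k + 1) ≤ (1 - b / (ξ + k)) * a k + D / (ξ + k) ^ 2) :
    ∀ k ≥ 1, a k ≤ C / (ξ + k) := by
  intro k hk
  induction k, hk using Nat.le_induction with
  | base => simpa using h1
  | succ k hk ih =>
    have hbt : b ≤ ξ + k := by
      have : (1 : ℝ) ≤ k := by exact_mod_cast hk
      linarith
    push_cast
    rw [← add_assoc]
    exact (hrec k hk).trans (contraction_step_le_div_add_one hb hbt hC hD ih)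

theorem diminishing_step_recursion_general
    (β c mu ξ K C_V s : ℝ)
    (hs : 0 < s)
    (hβcμ : 1 < β * c * mu) (hβcμ' : β * c * mu ≤ ξ + 1)
    (a : ℕ → ℝ) (ha0 : ∀ k ≥ 1, 0 ≤ a k)
    (hrec : ∀ k ≥ 1, a (k + 1) ≤ (1 - β * c * mu / (ξ + (k : ℝ))) * a k
        + β ^ 2 * K * C_V * s / (2 * (ξ + (k : ℝ)) ^ 2)) :
    ∀ k ≥ 1, a k ≤
      max (β ^ 2 * K * C_V / (2 * (β * c * mu - 1))) ((ξ + 1) * a 1 / s) * s / (ξ + (k : ℝ)) := by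
  set κ := max (β ^ 2 * K * C_V / (2 * (β * c * mu - 1))) ((ξ + 1) * a 1 / s)
  have hξ1 : 0 < ξ + 1 := by linarith
  have hκ_noise : β ^ 2 * K * C_V ≤ 2 * (β * c * mu - 1) * κ :=
    (div_le_iff₀' (by linarith)).mp (le_max_left _ _)
  have hκ_init : (ξ + 1) * a 1 ≤ κ * s := (div_le_iff₀ hs).mp (le_max_right _ _)
  have hκ : 0 ≤ κ := (div_nonneg (mul_nonneg hξ1.le (ha0 1 le_rfl)) hs.le).trans (le_max_right _ _)
  refine le_div_of_contraction_recursion (D := β ^ 2 * K * C_V * s / 2) hβcμ hβcμ'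
    (by positivity) (by nlinarith) ((le_div_iff₀' hξ1).mpr hκ_init) fun k hk => ?_
  rw [div_div]
  exact hrec k hk

/-- Diminishing-stepsize recursion: if nonnegative reals `a_k` satisfy
`a_{k+1} ≤ (1 - βcμ/(ξ+k)) a_k + β²KC_V s/(2(ξ+k)²)` for `k ≥ 1`, with `βcμ > 1` and
`βcμ ≤ ξ + 1`, then `a_k ≤ κ s/(ξ+k)` where
`κ = max (β²KC_V/(2(βcμ-1))) ((ξ+1)a₁/s)`. -/
theorem diminishing_step_recursion
    (β c mu ξ K C_V s : ℝ)
    (hβ : 0 < β) (hc : 0 < c) (hmu : 0 < mu) (hξ : 0 < ξ) (hK : 0 < K)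
    (hCV : 0 ≤ C_V) (hs : 0 < s)
    (hβcμ : 1 < β * c * mu) (hβcμ' : β * c * mu ≤ ξ + 1)
    (a : ℕ → ℝ) (ha0 : ∀ k ≥ 1, 0 ≤ a k)
    (hrec : ∀ k ≥ 1, a (k + 1) ≤ (1 - β * c * mu / (ξ + (k : ℝ))) * a k
        + β ^ 2 * K * C_V * s / (2 * (ξ + (k : ℝ)) ^ 2)) :
    ∀ k ≥ 1, a k ≤
      max (β ^ 2 * K * C_V / (2 * (β * c * mu - 1))) ((ξ + 1) * a 1 / s) * s / (ξ + (k : ℝ)) :=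
  diminishing_step_recursion_general β c mu ξ K C_V s hs hβcμ hβcμ' a ha0 hrec
end

section
/- Let P^ℕ denote the product probability measure on the sequence space X^ℕ, so that the coordinate maps ω ↦ ω_i are i.i.d. with law P, and write E[·] for the integral with respect to P^ℕ. Assume s > 0. Fix β > 1/(c·μ) and ξ > 0 such that the diminishing stepsizes η_i := β/(ξ + i) satisfy η₁ = β/(ξ + 1) ≤ μ/(K·(M_V·(1 + s) + μ_G²)). Fix θ₁ ∈ E and define the iterates θ₁(ω) = θ₁ and θ_{i+1}(ω) = θ_i(ω) − η_i·g(ω_i, θ_i(ω)) for i ≥ 1, and assume that for every i the maps ω ↦ L(θ_i(ω)) and ω ↦ ‖g(ω_i, θ_i(ω))‖² are integrable with respect to P^ℕ. Set κ := max{ β²·K·C_V/(2·(β·c·μ − 1)), (ξ + 1)·L(θ₁)/s }. Then E[L(θ_i)] ≤ κ·s/(ξ + i) for every i ≥ 1. -/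
open MeasureTheory ProbabilityTheory
open scoped RealInnerProductSpace Gradient

/-!
Along the segment from `θ` to `θ - η g`, the `K`-Lipschitz gradient gives the descent inequality
`L (θ - η g) ≤ L θ - η ⟪∇L θ, g⟫ + K η² ‖g‖² / 2`. Averaging over a fresh sample and using the
moment bounds, the stepsize restriction `η K (M_V (1 + s) + μ_G²) ≤ μ` and the PL inequality gives
a contraction in mean, `E L (θ - η g) ≤ (1 - η c μ) L θ + η² K C_V s / 2`. The iterate `θ_i` is a
measurable function of `ω_0, …, ω_{i-1}`, hence independent of `ω_i`, so by Fubini the same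
inequality holds for `a_i = E L(θ_i)`. With `η_i = β / (ξ + i)` and `β c μ > 1` this recursion
propagates the bound `a_i ≤ κ s / t` from `t = ξ + i` to `t + 1`: the choice of `κ` gives
`(t - β c μ) κ s + β² K C_V s / 2 ≤ κ s (t - 1)`, and `(t - 1)(t + 1) ≤ t²`.
-/

theorem le_add_inner_gradient_add_sq_of_lipschitz_gradient {E : Type*} [NormedAddCommGroup E]
    [InnerProductSpace ℝ E] [CompleteSpace E] {L : E → ℝ} (hL : Differentiable ℝ L) {K : ℝ}
    (hLip : ∀ a b : E, ‖∇ L a - ∇ L b‖ ≤ K * ‖a - b‖) (x y : E) :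
    L y ≤ L x + ⟪∇ L x, y - x⟫ + K / 2 * ‖y - x‖ ^ 2 := by
  set v := y - x
  let φ : ℝ → ℝ := fun t => L (x + t • v) - t * ⟪∇ L x, v⟫ - K / 2 * t ^ 2 * ‖v‖ ^ 2
  have hline : ∀ t : ℝ, HasDerivAt (fun t : ℝ => L (x + t • v)) ⟪∇ L (x + t • v), v⟫ t := by
    intro t
    have hpath : HasDerivAt (fun t : ℝ => x + t • v) v t := by
      simpa using ((hasDerivAt_id t).smul_const v).const_add x
    simpa [Function.comp_def] using
      (hL (x + t • v)).hasGradientAt.hasFDerivAt.comp_hasDerivAt t hpath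
  have hφ' : ∀ t : ℝ, HasDerivAt φ
      (⟪∇ L (x + t • v), v⟫ - ⟪∇ L x, v⟫ - K * t * ‖v‖ ^ 2) t := by
    intro t
    refine (((hline t).sub ((hasDerivAt_id t).mul_const ⟪∇ L x, v⟫)).sub
      (((hasDerivAt_pow 2 t).const_mul (K / 2)).mul_const (‖v‖ ^ 2))).congr_deriv ?_
    ring
  have hanti : AntitoneOn φ (Set.Icc 0 1) := by
    refine antitoneOn_of_hasDerivWithinAt_nonpos (convex_Icc 0 1)
      (fun t _ => (hφ' t).continuousAt.continuousWithinAt) (fun t _ => (hφ' t).hasDerivWithinAt) ?_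
    intro t ht
    rw [interior_Icc] at ht
    have hgrad : ⟪∇ L (x + t • v) - ∇ L x, v⟫ ≤ K * t * ‖v‖ ^ 2 :=
      calc ⟪∇ L (x + t • v) - ∇ L x, v⟫ ≤ ‖∇ L (x + t • v) - ∇ L x‖ * ‖v‖ :=
            real_inner_le_norm _ _
        _ ≤ K * ‖x + t • v - x‖ * ‖v‖ := by gcongr; exact hLip _ _
        _ = K * t * ‖v‖ ^ 2 := by
            rw [add_sub_cancel_left, norm_smul, Real.norm_of_nonneg ht.1.le]; ring
    rw [inner_sub_left] at hgrad
    linarith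
  have h01 : φ 1 ≤ φ 0 := hanti (by simp) (by simp) zero_le_one
  have hy : x + (1 : ℝ) • v = y := by simp [v]
  simp only [φ, hy, zero_smul, add_zero] at h01
  linarith

section StochasticStep

variable {E : Type*} [NormedAddCommGroup E] [InnerProductSpace ℝ E] [CompleteSpace E]
  {X : Type*} [MeasurableSpace X] {P : Measure X} [IsProbabilityMeasure P]
  {L : E → ℝ} {g : X × E → E}

theorem integral_sub_smul_le_of_lipschitz_gradient (hL0 : ∀ θ, 0 ≤ L θ)
    (hL : Differentiable ℝ L) {K : ℝ} (hLip : ∀ a b : E, ‖∇ L a - ∇ L b‖ ≤ K * ‖a - b‖) (θ : E)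
    (hgInt : Integrable (fun x => g (x, θ)) P) (hgSqInt : Integrable (fun x => ‖g (x, θ)‖ ^ 2) P)
    (η : ℝ) :
    ∫ x, L (θ - η • g (x, θ)) ∂P ≤
      L θ - η * ⟪∇ L θ, ∫ x, g (x, θ) ∂P⟫ + K / 2 * η ^ 2 * ∫ x, ‖g (x, θ)‖ ^ 2 ∂P := by
  have hpt : ∀ x, L (θ - η • g (x, θ)) ≤
      L θ - η * ⟪∇ L θ, g (x, θ)⟫ + K / 2 * η ^ 2 * ‖g (x, θ)‖ ^ 2 := by
    intro x
    have h := le_add_inner_gradient_add_sq_of_lipschitz_gradient hL hLip θ (θ - η • g (x, θ))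
    rwa [sub_sub_cancel_left, inner_neg_right, real_inner_smul_right, norm_neg, norm_smul,
      mul_pow, Real.norm_eq_abs, sq_abs, ← sub_eq_add_neg, ← mul_assoc] at h
  have hinner : Integrable (fun x => η * ⟪∇ L θ, g (x, θ)⟫) P := (hgInt.const_inner _).const_mul _
  have hlin : Integrable (fun x => L θ - η * ⟪∇ L θ, g (x, θ)⟫) P :=
    (integrable_const _).sub hinner
  have hsq : Integrable (fun x => K / 2 * η ^ 2 * ‖g (x, θ)‖ ^ 2) P := hgSqInt.const_mul _
  calc ∫ x, L (θ - η • g (x, θ)) ∂P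
      ≤ ∫ x, (L θ - η * ⟪∇ L θ, g (x, θ)⟫ + K / 2 * η ^ 2 * ‖g (x, θ)‖ ^ 2) ∂P :=
        integral_mono_of_nonneg (.of_forall fun x => hL0 _) (hlin.add hsq) (.of_forall hpt)
    _ = _ := by
        rw [integral_add hlin hsq, integral_sub (integrable_const _) hinner, integral_const,
          integral_const_mul, integral_const_mul, integral_inner hgInt]
        simp

theorem integral_sub_smul_le_of_moments (hL0 : ∀ θ, 0 ≤ L θ) (hL : Differentiable ℝ L) {K : ℝ}
    (hK : 0 ≤ K) (hLip : ∀ a b : E, ‖∇ L a - ∇ L b‖ ≤ K * ‖a - b‖) {c mu muG C_V M_V s : ℝ}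
    (hmu : 0 ≤ mu) (θ : E) (hPL : 2 * c * L θ ≤ ‖∇ L θ‖ ^ 2)
    (hgInt : Integrable (fun x => g (x, θ)) P) (hgSqInt : Integrable (fun x => ‖g (x, θ)‖ ^ 2) P)
    (hmom1 : mu * ‖∇ L θ‖ ^ 2 ≤ ⟪∇ L θ, ∫ x, g (x, θ) ∂P⟫)
    (hmom2 : ‖∫ x, g (x, θ) ∂P‖ ≤ muG * ‖∇ L θ‖)
    (hvar : ∫ x, ‖g (x, θ)‖ ^ 2 ∂P - ‖∫ x, g (x, θ) ∂P‖ ^ 2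
        ≤ C_V * s + M_V * (1 + s) * ‖∇ L θ‖ ^ 2)
    {η : ℝ} (hη : 0 ≤ η) (hηD : η * (K * (M_V * (1 + s) + muG ^ 2)) ≤ mu) :
    ∫ x, L (θ - η • g (x, θ)) ∂P ≤ (1 - η * (c * mu)) * L θ + η ^ 2 * K * C_V * s / 2 := by
  set G := ‖∇ L θ‖ ^ 2
  set D := M_V * (1 + s) + muG ^ 2
  have hdescent := integral_sub_smul_le_of_lipschitz_gradient hL0 hL hLip θ hgInt hgSqInt η
  have hmean : ‖∫ x, g (x, θ) ∂P‖ ^ 2 ≤ muG ^ 2 * G := by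
    rw [← mul_pow]; exact pow_le_pow_left₀ (norm_nonneg _) hmom2 2
  have hsecond :
      K / 2 * η ^ 2 * ∫ x, ‖g (x, θ)‖ ^ 2 ∂P ≤ η ^ 2 * K * C_V * s / 2 + η * mu / 2 * G :=
    calc K / 2 * η ^ 2 * ∫ x, ‖g (x, θ)‖ ^ 2 ∂P ≤ K / 2 * η ^ 2 * (C_V * s + D * G) := by
          gcongr; linarith
      _ = η ^ 2 * K * C_V * s / 2 + η / 2 * (η * (K * D)) * G := by ring
      _ ≤ η ^ 2 * K * C_V * s / 2 + η / 2 * mu * G := by gcongr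
      _ = _ := by ring
  have hfirst : η * (mu * G) ≤ η * ⟪∇ L θ, ∫ x, g (x, θ) ∂P⟫ := mul_le_mul_of_nonneg_left hmom1 hη
  have hPL' : η * mu / 2 * (2 * c * L θ) ≤ η * mu / 2 * G := by gcongr
  linarith

end StochasticStep

theorem integral_comp_eq_integral_integral_of_indepFun {Ω α β F : Type*} [MeasurableSpace Ω]
    [MeasurableSpace α] [MeasurableSpace β] [NormedAddCommGroup F] [NormedSpace ℝ F]
    {μ : Measure Ω} [IsFiniteMeasure μ] {A : Ω → α} {Y : Ω → β} (hA : Measurable A)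
    (hY : Measurable Y) (hAY : IndepFun A Y μ) {φ : α × β → F} (hφ : StronglyMeasurable φ)
    (hint : Integrable (fun ω => φ (A ω, Y ω)) μ) :
    ∫ ω, φ (A ω, Y ω) ∂μ = ∫ ω, ∫ y, φ (A ω, y) ∂(μ.map Y) ∂μ := by
  have hpair : Measurable fun ω => (A ω, Y ω) := hA.prodMk hY
  have hmap : μ.map (fun ω => (A ω, Y ω)) = (μ.map A).prod (μ.map Y) :=
    (indepFun_iff_map_prod_eq_prod_map_map hA.aemeasurable hY.aemeasurable).mp hAY
  have hint' : Integrable φ ((μ.map A).prod (μ.map Y)) := by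
    rwa [← hmap, integrable_map_measure hφ.aestronglyMeasurable hpair.aemeasurable]
  calc ∫ ω, φ (A ω, Y ω) ∂μ = ∫ p, φ p ∂((μ.map A).prod (μ.map Y)) := by
        rw [← hmap, integral_map hpair.aemeasurable hφ.aestronglyMeasurable]
    _ = ∫ a, ∫ y, φ (a, y) ∂(μ.map Y) ∂(μ.map A) := integral_prod φ hint'
    _ = ∫ ω, ∫ y, φ (A ω, y) ∂(μ.map Y) ∂μ :=
        integral_map hA.aemeasurable hφ.integral_prod_right'.aestronglyMeasurable

section Recursion

variable {X E : Type*} [MeasurableSpace X] [MeasurableSpace E] {Φ : ℕ → E × X → E}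
  {u : (ℕ → X) → ℕ → E} {θ₁ : E}

theorem exists_measurable_eq_comp_restrict_range (hΦ : ∀ i, Measurable (Φ i))
    (hu1 : ∀ ω, u ω 1 = θ₁) (hu : ∀ ω, ∀ i ≥ 1, u ω (i + 1) = Φ i (u ω i, ω i)) :
    ∀ i ≥ 1, ∃ F : ((j : Finset.range i) → X) → E,
      Measurable F ∧ ∀ ω, u ω i = F ((Finset.range i).restrict ω) := by
  intro i hi
  induction i, hi using Nat.le_induction with
  | base => exact ⟨fun _ => θ₁, measurable_const, hu1⟩
  | succ i hi ih =>
    obtain ⟨F, hF, huF⟩ := ih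
    have hsub : Finset.range i ⊆ Finset.range (i + 1) := by simp
    have hlast : i ∈ Finset.range (i + 1) := by simp
    refine ⟨fun p => Φ i (F (Finset.restrict₂ (π := fun _ => X) hsub p), p ⟨i, hlast⟩), ?_,
      fun ω => ?_⟩
    · exact (hΦ i).comp (((hF.comp (Finset.measurable_restrict₂ hsub))).prodMk
        (measurable_pi_apply _))
    · rw [hu ω i hi, huF ω]
      rfl

theorem integral_comp_succ_le_of_iIndepFun {μ : Measure (ℕ → X)} [IsProbabilityMeasure μ]
    {P : Measure X} (hiid : iIndepFun (fun i ω => ω i) μ) (hΦ : ∀ i, Measurable (Φ i))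
    (hu1 : ∀ ω, u ω 1 = θ₁) (hu : ∀ ω, ∀ i ≥ 1, u ω (i + 1) = Φ i (u ω i, ω i))
    {f : E → ℝ} (hf : Measurable f) (hf0 : ∀ θ, 0 ≤ f θ) {i : ℕ} (hi : 1 ≤ i)
    (hmap : μ.map (fun ω => ω i) = P) (hint : Integrable (fun ω => f (u ω i)) μ)
    (hint' : Integrable (fun ω => f (u ω (i + 1))) μ) {a b : ℝ}
    (hstep : ∀ θ, ∫ x, f (Φ i (θ, x)) ∂P ≤ a * f θ + b) :
    ∫ ω, f (u ω (i + 1)) ∂μ ≤ a * ∫ ω, f (u ω i) ∂μ + b := by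
  obtain ⟨F, hF, huF⟩ := exists_measurable_eq_comp_restrict_range hΦ hu1 hu i hi
  have hA : Measurable fun ω => u ω i := by
    simp only [huF]; exact hF.comp (Finset.measurable_restrict _)
  have hcoord : Measurable fun ω : ℕ → X => ω i := measurable_pi_apply i
  have hindep : IndepFun (fun ω => u ω i) (fun ω => ω i) μ := by
    simp only [huF]
    exact (hiid.indepFun_finset (Finset.range i) {i} (by simp) measurable_pi_apply).comp hF
      (measurable_pi_apply ⟨i, Finset.mem_singleton_self i⟩)
  have hφ : Measurable fun p : E × X => f (Φ i p) := hf.comp (hΦ i)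
  have hsucc : (fun ω => f (u ω (i + 1))) = fun ω => f (Φ i (u ω i, ω i)) := by
    funext ω; rw [hu ω i hi]
  calc ∫ ω, f (u ω (i + 1)) ∂μ = ∫ ω, ∫ x, f (Φ i (u ω i, x)) ∂P ∂μ := by
        rw [hsucc, integral_comp_eq_integral_integral_of_indepFun hA hcoord hindep
          hφ.stronglyMeasurable (hsucc ▸ hint'), hmap]
    _ ≤ ∫ ω, (a * f (u ω i) + b) ∂μ :=
        integral_mono_of_nonneg (.of_forall fun ω => integral_nonneg fun x => hf0 _)
          ((hint.const_mul a).add (integrable_const b)) (.of_forall fun ω => hstep _)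
    _ = a * ∫ ω, f (u ω i) ∂μ + b := by
        rw [integral_add (hint.const_mul a) (integrable_const b), integral_const_mul]
        simp

end Recursion

theorem le_div_of_le_one_sub_div_mul_add_div_sq {a : ℕ → ℝ} {b C κ ξ : ℝ} (hξ : 0 < ξ + 1)
    (hκ : 0 ≤ κ) (hC : C ≤ κ * (b - 1)) (hb : ∀ i : ℕ, 1 ≤ i → b ≤ ξ + i) (ha1 : a 1 ≤ κ / (ξ + 1))
    (hrec : ∀ i ≥ 1, a (i + 1) ≤ (1 - b / (ξ + i)) * a i + C / (ξ + i) ^ 2) :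
    ∀ i ≥ 1, a i ≤ κ / (ξ + i) := by
  intro i hi
  induction i, hi using Nat.le_induction with
  | base => simpa using ha1
  | succ i hi ih =>
    have hi' : (1 : ℝ) ≤ i := by exact_mod_cast hi
    have ht : 0 < ξ + i := by linarith
    have hcoef : 0 ≤ 1 - b / (ξ + i) := by
      rw [sub_nonneg, div_le_one ht]; exact hb i hi
    calc a (i + 1) ≤ (1 - b / (ξ + i)) * (κ / (ξ + i)) + C / (ξ + i) ^ 2 := by
          grw [hrec i hi, ih]
      _ = ((ξ + i - b) * κ + C) / (ξ + i) ^ 2 := by field_simp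
      _ ≤ κ * ((ξ + i) - 1) / (ξ + i) ^ 2 := by gcongr; linarith
      _ ≤ κ / (ξ + i + 1) := by
          rw [div_le_div_iff₀ (by positivity) (by positivity)]
          nlinarith
      _ = κ / (ξ + ↑(i + 1)) := by push_cast; ring

theorem mul_sq_le_of_le_sqrt_div_mul {K c mu muG : ℝ} (hK : 0 ≤ K) (hc : 0 < c) (hmu : 0 ≤ mu)
    (h : mu ≤ Real.sqrt (K / c) * muG) : c * mu ^ 2 ≤ K * muG ^ 2 := by
  have hsq := pow_le_pow_left₀ hmu h 2
  rw [mul_pow, Real.sq_sqrt (by positivity)] at hsq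
  calc c * mu ^ 2 ≤ c * (K / c * muG ^ 2) := by gcongr
    _ = K * muG ^ 2 := by field_simp

theorem diminishing_stepsize_bounds {β ξ c mu D : ℝ} (hβ : 0 ≤ β) (hξ : 0 < ξ + 1) (hmu : 0 < mu)
    (hD : 0 < D) (hcD : c * mu ^ 2 ≤ D) (hη1 : β / (ξ + 1) ≤ mu / D) {i : ℕ} (hi : 1 ≤ i) :
    β / (ξ + i) * D ≤ mu ∧ β * c * mu ≤ ξ + i := by
  have hi' : (1 : ℝ) ≤ i := by exact_mod_cast hi
  have hηD : β / (ξ + i) * D ≤ mu := by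
    rw [← le_div_iff₀ hD]
    exact (div_le_div_of_nonneg_left hβ (by linarith) (by linarith)).trans hη1
  refine ⟨hηD, le_of_mul_le_mul_right ?_ hmu⟩
  have hβD : β * D ≤ mu * (ξ + i) := by
    rwa [← div_le_iff₀ (by linarith), ← div_mul_eq_mul_div]
  nlinarith

theorem sgd_diminishing_step_convergence_general
    -- Parameter space: finite-dimensional real inner product space
    {E : Type*} [NormedAddCommGroup E] [InnerProductSpace ℝ E] [FiniteDimensional ℝ E] [MeasurableSpace E] [BorelSpace E]
    -- Loss function: nonnegative, differentiable, Lipschitz gradient, 2c-PL* condition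
    (L : E → ℝ) (hL0 : ∀ θ : E, 0 ≤ L θ) (hLdiff : Differentiable ℝ L)
    (K : ℝ) (hK : 0 < K)
    (hLip : ∀ θ₁ θ₂ : E, ‖∇ L θ₁ - ∇ L θ₂‖ ≤ K * ‖θ₁ - θ₂‖)
    (c : ℝ) (hc : 0 < c) (hPL : ∀ θ : E, 2 * c * L θ ≤ ‖∇ L θ‖ ^ 2)
    -- Stochastic gradient on a probability space
    {X : Type*} [MeasurableSpace X] (P : Measure X) [IsProbabilityMeasure P]
    (g : X × E → E) (hgmeas : Measurable g)
    (hgInt : ∀ θ : E, Integrable (fun x => g (x, θ)) P)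
    (hgSqInt : ∀ θ : E, Integrable (fun x => ‖g (x, θ)‖ ^ 2) P)
    -- constants
    (mu muG C_V M_V s : ℝ) (hmu : 0 < mu)
    (hmu_le : mu ≤ Real.sqrt (K / c) * muG)
    (hMV : 0 ≤ M_V)
    -- moment assumptions (i), (ii), (iii)
    (hmom1 : ∀ θ : E, mu * ‖∇ L θ‖ ^ 2 ≤ ⟪∇ L θ, ∫ x, g (x, θ) ∂P⟫)
    (hmom2 : ∀ θ : E, ‖∫ x, g (x, θ) ∂P‖ ≤ muG * ‖∇ L θ‖)
    (hvar : ∀ θ : E, ∫ x, ‖g (x, θ)‖ ^ 2 ∂P - ‖∫ x, g (x, θ) ∂P‖ ^ 2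
        ≤ C_V * s + M_V * (1 + s) * ‖∇ L θ‖ ^ 2)
    -- product measure on the sequence space with i.i.d. coordinates of law P
    (Pseq : Measure (ℕ → X)) [IsProbabilityMeasure Pseq]
    (hmap : ∀ i : ℕ, Pseq.map (fun ω => ω i) = P)
    (hiid : iIndepFun
      (fun (i : ℕ) (ω : ℕ → X) => ω i) Pseq)
    -- positive quadrature error
    (hs' : 0 < s)
    -- diminishing stepsizes η_i = β / (ξ + i)
    (β ξ : ℝ) (hβ : 1 / (c * mu) < β) (hξ : 0 < ξ)
    (hη1 : β / (ξ + 1) ≤ mu / (K * (M_V * (1 + s) + muG ^ 2)))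
    -- SGD iterates
    (θ₁ : E) (θiter : (ℕ → X) → ℕ → E)
    (hiter1 : ∀ ω : ℕ → X, θiter ω 1 = θ₁)
    (hiter : ∀ ω : ℕ → X, ∀ i ≥ 1,
      θiter ω (i + 1) = θiter ω i - (β / (ξ + (i : ℝ))) • g (ω i, θiter ω i))
    -- integrability of the relevant functionals along the iterates
    (hLint : ∀ i : ℕ, Integrable (fun ω => L (θiter ω i)) Pseq) :
    ∀ i ≥ 1, ∫ ω, L (θiter ω i) ∂Pseq ≤
      max (β ^ 2 * K * C_V / (2 * (β * c * mu - 1))) ((ξ + 1) * L θ₁ / s) * s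
        / (ξ + (i : ℝ)) := by
  set D := K * (M_V * (1 + s) + muG ^ 2)
  set κ := max (β ^ 2 * K * C_V / (2 * (β * c * mu - 1))) ((ξ + 1) * L θ₁ / s)
  have hcmu : 0 < c * mu := mul_pos hc hmu
  have hβcmu : 1 < β * c * mu := by rw [div_lt_iff₀ hcmu] at hβ; linarith
  have hβ0 : 0 < β := by nlinarith
  have hD : 0 < D :=
    (div_pos_iff_of_pos_left hmu).mp ((div_pos hβ0 (by linarith)).trans_le hη1)
  have hcD : c * mu ^ 2 ≤ D :=
    (mul_sq_le_of_le_sqrt_div_mul hK.le hc hmu.le hmu_le).trans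
      (by nlinarith [mul_nonneg hK.le (mul_nonneg hMV (by linarith : (0 : ℝ) ≤ 1 + s))])
  have hstep : ∀ i : ℕ, 1 ≤ i → β / (ξ + i) * D ≤ mu ∧ β * c * mu ≤ ξ + i := fun i hi =>
    diminishing_stepsize_bounds hβ0.le (by linarith) hmu hD hcD hη1 hi
  have hrec : ∀ i ≥ 1, ∫ ω, L (θiter ω (i + 1)) ∂Pseq ≤
      (1 - β * c * mu / (ξ + i)) * ∫ ω, L (θiter ω i) ∂Pseq
        + β ^ 2 * K * C_V * s / 2 / (ξ + i) ^ 2 := by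
    intro i hi
    have h := integral_comp_succ_le_of_iIndepFun
      (Φ := fun i p => p.1 - (β / (ξ + i)) • g (p.2, p.1)) hiid
      (fun i => measurable_fst.sub ((hgmeas.comp measurable_swap).const_smul _)) hiter1 hiter
      hLdiff.continuous.measurable hL0 hi (hmap i) (hLint i) (hLint (i + 1))
      fun θ => integral_sub_smul_le_of_moments hL0 hLdiff hK.le hLip hmu.le θ (hPL θ) (hgInt θ)
        (hgSqInt θ) (hmom1 θ) (hmom2 θ) (hvar θ) (by positivity) (hstep i hi).1
    convert h using 2 <;> field_simp
  have hκ₁ : β ^ 2 * K * C_V ≤ κ * (2 * (β * c * mu - 1)) :=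
    (div_le_iff₀ (by linarith)).mp (le_max_left _ _)
  have hκ₂ : (ξ + 1) * L θ₁ ≤ κ * s := (div_le_iff₀ hs').mp (le_max_right _ _)
  refine le_div_of_le_one_sub_div_mul_add_div_sq (by linarith) (by nlinarith [hL0 θ₁])
    (by nlinarith) (fun i hi => (hstep i hi).2) ?_ hrec
  simp only [hiter1, integral_const, probReal_univ, one_smul]
  rwa [le_div_iff₀ (by linarith), mul_comm]

theorem sgd_diminishing_step_convergence
    -- Parameter space: finite-dimensional real inner product space
    {E : Type*} [NormedAddCommGroup E] [InnerProductSpace ℝ E] [FiniteDimensional ℝ E] [MeasurableSpace E] [BorelSpace E]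
    -- Loss function: nonnegative, differentiable, Lipschitz gradient, 2c-PL* condition
    (L : E → ℝ) (hL0 : ∀ θ : E, 0 ≤ L θ) (hLdiff : Differentiable ℝ L)
    (K : ℝ) (hK : 0 < K)
    (hLip : ∀ θ₁ θ₂ : E, ‖∇ L θ₁ - ∇ L θ₂‖ ≤ K * ‖θ₁ - θ₂‖)
    (c : ℝ) (hc : 0 < c) (hPL : ∀ θ : E, 2 * c * L θ ≤ ‖∇ L θ‖ ^ 2)
    -- Stochastic gradient on a probability space
    {X : Type*} [MeasurableSpace X] (P : Measure X) [IsProbabilityMeasure P]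
    (g : X × E → E) (hgmeas : Measurable g)
    (hgInt : ∀ θ : E, Integrable (fun x => g (x, θ)) P)
    (hgSqInt : ∀ θ : E, Integrable (fun x => ‖g (x, θ)‖ ^ 2) P)
    -- constants
    (mu muG C_V M_V s : ℝ) (hmu : 0 < mu) (hmuG : 0 < muG)
    (hmu_le : mu ≤ Real.sqrt (K / c) * muG)
    (hCV : 0 ≤ C_V) (hMV : 0 ≤ M_V) (hs : 0 ≤ s)
    -- moment assumptions (i), (ii), (iii)
    (hmom1 : ∀ θ : E, mu * ‖∇ L θ‖ ^ 2 ≤ ⟪∇ L θ, ∫ x, g (x, θ) ∂P⟫)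
    (hmom2 : ∀ θ : E, ‖∫ x, g (x, θ) ∂P‖ ≤ muG * ‖∇ L θ‖)
    (hvar : ∀ θ : E, ∫ x, ‖g (x, θ)‖ ^ 2 ∂P - ‖∫ x, g (x, θ) ∂P‖ ^ 2
        ≤ C_V * s + M_V * (1 + s) * ‖∇ L θ‖ ^ 2)
    -- product measure on the sequence space with i.i.d. coordinates of law P
    (Pseq : Measure (ℕ → X)) [IsProbabilityMeasure Pseq]
    (hmap : ∀ i : ℕ, Pseq.map (fun ω => ω i) = P)
    (hiid : iIndepFun
      (fun (i : ℕ) (ω : ℕ → X) => ω i) Pseq)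
    -- positive quadrature error
    (hs' : 0 < s)
    -- diminishing stepsizes η_i = β / (ξ + i)
    (β ξ : ℝ) (hβ : 1 / (c * mu) < β) (hξ : 0 < ξ)
    (hη1 : β / (ξ + 1) ≤ mu / (K * (M_V * (1 + s) + muG ^ 2)))
    -- SGD iterates
    (θ₁ : E) (θiter : (ℕ → X) → ℕ → E)
    (hiter1 : ∀ ω : ℕ → X, θiter ω 1 = θ₁)
    (hiter : ∀ ω : ℕ → X, ∀ i ≥ 1,
      θiter ω (i + 1) = θiter ω i - (β / (ξ + (i : ℝ))) • g (ω i, θiter ω i))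
    -- integrability of the relevant functionals along the iterates
    (hLint : ∀ i : ℕ, Integrable (fun ω => L (θiter ω i)) Pseq)
    (hgiter : ∀ i : ℕ, Integrable (fun ω => ‖g (ω i, θiter ω i)‖ ^ 2) Pseq) :
    ∀ i ≥ 1, ∫ ω, L (θiter ω i) ∂Pseq ≤
      max (β ^ 2 * K * C_V / (2 * (β * c * mu - 1))) ((ξ + 1) * L θ₁ / s) * s
        / (ξ + (i : ℝ)) :=
  sgd_diminishing_step_convergence_general L hL0 hLdiff K hK hLip c hc hPL P g hgmeas hgInt hgSqInt
    mu muG C_V M_V s hmu hmu_le hMV hmom1 hmom2 hvar Pseq hmap hiid hs' β ξ hβ hξ hη1 θ₁ θiter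
    hiter1 hiter hLint
end

section
/- Let v ∈ H and let ℒ_r, ℒ_b, ε_r, ε_b be nonnegative reals such that ‖A v − f‖₂² ≤ ℒ_r + ε_r and ‖B v − g‖₂² ≤ ℒ_b + ε_b (ℒ_r and ℒ_b play the role of the discretized empirical residual and boundary losses, and ε_r, ε_b the quadrature errors). Then ‖u* − v‖₂ ≤ (√2/C₁) · (ℒ_r + ℒ_b + ε_r + ε_b)^{1/2}. -/
open MeasureTheory

/-- Error estimate for PINNs: under the stability bound `C₁ ‖u‖₂ ≤ ‖A u‖₂ + ‖B u‖₂`, if the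
squared residual norms are bounded by empirical losses plus quadrature errors,
`‖A v - f‖₂² ≤ ℒ_r + ε_r` and `‖B v - g‖₂² ≤ ℒ_b + ε_b`, then
`‖u* - v‖₂ ≤ (√2 / C₁) (ℒ_r + ℒ_b + ε_r + ε_b)^{1/2}`. -/
theorem error_estimate_empirical_loss
    {Ω : Type*} [MeasurableSpace Ω] (μ : Measure Ω)
    {Γ : Type*} [MeasurableSpace Γ] (ν : Measure Γ)
    (A : Lp ℝ 2 μ →ₗ[ℝ] Lp ℝ 2 μ) (B : Lp ℝ 2 μ →ₗ[ℝ] Lp ℝ 2 ν)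
    (C₁ : ℝ) (hC₁ : 0 < C₁)
    (hstab : ∀ u : Lp ℝ 2 μ, C₁ * ‖u‖ ≤ ‖A u‖ + ‖B u‖)
    (f : Lp ℝ 2 μ) (g : Lp ℝ 2 ν) (ustar : Lp ℝ 2 μ)
    (hA : A ustar = f) (hB : B ustar = g)
    (v : Lp ℝ 2 μ)
    (Lr Lb εr εb : ℝ) (hLr : 0 ≤ Lr) (hLb : 0 ≤ Lb) (hεr : 0 ≤ εr) (hεb : 0 ≤ εb)
    (hres : ‖A v - f‖ ^ 2 ≤ Lr + εr) (hbd : ‖B v - g‖ ^ 2 ≤ Lb + εb) :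
    ‖ustar - v‖ ≤ Real.sqrt 2 / C₁ * Real.sqrt (Lr + Lb + εr + εb) := by
  set a := ‖A v - f‖ with ha
  set b := ‖B v - g‖ with hb
  have ha0 : 0 ≤ a := norm_nonneg _
  have hb0 : 0 ≤ b := norm_nonneg _
  have key : C₁ * ‖ustar - v‖ ≤ a + b := by
    have := hstab (ustar - v)
    rw [map_sub, map_sub, hA, hB] at this
    have e1 : ‖f - A v‖ = a := by rw [ha, norm_sub_rev]
    have e2 : ‖g - B v‖ = b := by rw [hb, norm_sub_rev]
    linarith [this, e1.le, e2.ge, e1.ge, e2.le]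
  have hsum : a ^ 2 + b ^ 2 ≤ Lr + Lb + εr + εb := by linarith
  have hab : a + b ≤ Real.sqrt 2 * Real.sqrt (Lr + Lb + εr + εb) := by
    have h1 : a + b ≤ Real.sqrt 2 * Real.sqrt (a ^ 2 + b ^ 2) := by
      rw [← Real.sqrt_mul (by norm_num : (0:ℝ) ≤ 2)]
      have : (a + b) ^ 2 ≤ 2 * (a ^ 2 + b ^ 2) := by nlinarith [sq_nonneg (a - b)]
      calc a + b = Real.sqrt ((a + b) ^ 2) := (Real.sqrt_sq (by positivity)).symm
        _ ≤ Real.sqrt (2 * (a ^ 2 + b ^ 2)) := Real.sqrt_le_sqrt this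
    have h2 : Real.sqrt (a ^ 2 + b ^ 2) ≤ Real.sqrt (Lr + Lb + εr + εb) :=
      Real.sqrt_le_sqrt hsum
    calc a + b ≤ Real.sqrt 2 * Real.sqrt (a ^ 2 + b ^ 2) := h1
      _ ≤ Real.sqrt 2 * Real.sqrt (Lr + Lb + εr + εb) := by
          exact mul_le_mul_of_nonneg_left h2 (Real.sqrt_nonneg 2)
  rw [div_mul_eq_mul_div, le_div_iff₀ hC₁, mul_comm]
  linarith
end

section
/- Let P^ℕ be the product probability measure on X^ℕ (i.i.d. coordinates with law P) and E[·] the integral with respect to P^ℕ. Fix θ₁ ∈ E and a stepsize η with 0 < η ≤ μ/(K·(M_V·(1 + s) + μ_G²)), define the iterates θ₁(ω) = θ₁ and θ_{i+1}(ω) = θ_i(ω) − η·g(ω_i, θ_i(ω)) for i ≥ 1, and assume for every i that ω ↦ L(θ_i(ω)) and ω ↦ ‖g(ω_i, θ_i(ω))‖² are integrable with respect to P^ℕ. Suppose further that there is a map v : E → H (the parameter-to-predicted-solution map) and a constant ε ≥ 0 such that for every θ ∈ E, ‖A v(θ) − f‖₂² + ‖B v(θ) − g‖₂² ≤ L(θ)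 + ε, and that ω ↦ ‖u* − v(θ_i(ω))‖₂² is measurable and integrable for every i. Then limsup_{i→∞} E[‖u* − v(θ_i)‖₂²] ≤ (2/C₁²) · ( η·K·C_V·s/(2·c·μ) + ε ). -/
open MeasureTheory ProbabilityTheory Filter
open scoped RealInnerProductSpace Gradient

/-!
By the descent lemma for the `K`-Lipschitz gradient, `L (θᵢ₊₁)` is at most
`L θᵢ - η ⟪∇L θᵢ, g (ωᵢ, θᵢ)⟫ + K η² / 2 ‖g (ωᵢ, θᵢ)‖²`. The fresh sample `ωᵢ` is independent of
`θᵢ`, which depends only on `ω₁, …, ωᵢ₋₁`, so this bound may be averaged over `ωᵢ` with `θᵢ`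
frozen. The moment bounds, the stepsize condition and the PL inequality then give the contraction
`E L(θᵢ₊₁) ≤ (1 - η μ c) E L(θᵢ) + η² K C_V s / 2`, hence `limsup E L(θᵢ) ≤ η K C_V s / (2 c μ)`.
The stability bound turns the loss into an error bound:
`C₁² ‖u* - v θ‖² ≤ 2 (‖A (v θ) - f‖² + ‖B (v θ) - g‖²) ≤ 2 (L θ + ε)`.
-/

theorem continuous_of_norm_sub_le {E F : Type*} [SeminormedAddCommGroup E]
    [SeminormedAddCommGroup F] {f : E → F} {K : ℝ} (h : ∀ a b, ‖f a - f b‖ ≤ K * ‖a - b‖) :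
    Continuous f :=
  (LipschitzWith.of_dist_le' (K := K) fun a b => by
    simpa only [dist_eq_norm] using h a b).continuous

section LipschitzGradient

variable {E : Type*} [NormedAddCommGroup E] [InnerProductSpace ℝ E] [CompleteSpace E]
  {L : E → ℝ} {K : ℝ}

theorem le_add_inner_gradient_add_of_lipschitz (hL : Differentiable ℝ L)
    (hLip : ∀ a b : E, ‖∇ L a - ∇ L b‖ ≤ K * ‖a - b‖) (x y : E) :
    L y ≤ L x + ⟪∇ L x, y - x⟫ + K / 2 * ‖y - x‖ ^ 2 := by
  set v := y - x
  -- `φ` is the gap between `L` and its quadratic upper model along the segment from `x` to `y`.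
  set φ : ℝ → ℝ := fun t => L (x + t • v) - t * ⟪∇ L x, v⟫ - K / 2 * t ^ 2 * ‖v‖ ^ 2
  have hφ' : ∀ t, HasDerivAt φ (⟪∇ L (x + t • v) - ∇ L x, v⟫ - K * t * ‖v‖ ^ 2) t := by
    intro t
    have hline : HasDerivAt (fun t : ℝ => x + t • v) v t := by
      simpa using ((hasDerivAt_id t).smul_const v).const_add x
    have hLt : HasDerivAt (fun t : ℝ => L (x + t • v)) ⟪∇ L (x + t • v), v⟫ t :=
      (hasGradientAt_iff_hasFDerivAt.mp (hL _).hasGradientAt).comp_hasDerivAt t hline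
    refine ((hLt.sub ((hasDerivAt_id t).mul_const _)).sub
      (((hasDerivAt_pow 2 t).const_mul (K / 2)).mul_const _)).congr_deriv ?_
    simp only [inner_sub_left, one_mul]
    ring
  have hφ'_nonpos : ∀ t ∈ interior (Set.Icc (0 : ℝ) 1),
      ⟪∇ L (x + t • v) - ∇ L x, v⟫ - K * t * ‖v‖ ^ 2 ≤ 0 := by
    intro t ht
    rw [interior_Icc] at ht
    refine sub_nonpos.mpr ?_
    calc ⟪∇ L (x + t • v) - ∇ L x, v⟫ ≤ K * ‖x + t • v - x‖ * ‖v‖ :=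
          (real_inner_le_norm _ _).trans (mul_le_mul_of_nonneg_right (hLip _ _) (norm_nonneg v))
      _ = K * t * ‖v‖ ^ 2 := by
          rw [add_sub_cancel_left, norm_smul, Real.norm_of_nonneg ht.1.le]; ring
  have hanti := antitoneOn_of_hasDerivWithinAt_nonpos (convex_Icc (0 : ℝ) 1)
    (fun t _ => (hφ' t).continuousAt.continuousWithinAt) (fun t _ => (hφ' t).hasDerivWithinAt)
    hφ'_nonpos
  have := hanti (Set.left_mem_Icc.mpr zero_le_one) (Set.right_mem_Icc.mpr zero_le_one)
    zero_le_one
  simp only [φ, v, one_smul, zero_smul, add_zero, add_sub_cancel] at this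
  linarith

theorem sq_norm_gradient_le_of_lipschitz (hL : Differentiable ℝ L) (hK : 0 < K)
    (hLip : ∀ a b : E, ‖∇ L a - ∇ L b‖ ≤ K * ‖a - b‖) (hL0 : ∀ θ, 0 ≤ L θ) (θ : E) :
    ‖∇ L θ‖ ^ 2 ≤ 2 * K * L θ := by
  have h := le_add_inner_gradient_add_of_lipschitz hL hLip θ (θ - K⁻¹ • ∇ L θ)
  rw [sub_sub_cancel_left, inner_neg_right, real_inner_smul_right, real_inner_self_eq_norm_sq,
    norm_neg, norm_smul, mul_pow, Real.norm_of_nonneg (inv_nonneg.mpr hK.le)] at h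
  have hquad : K / 2 * (K⁻¹ ^ 2 * ‖∇ L θ‖ ^ 2) = K⁻¹ * ‖∇ L θ‖ ^ 2 / 2 := by field_simp
  have h1 : K⁻¹ * ‖∇ L θ‖ ^ 2 ≤ 2 * L θ := by linarith [hL0 (θ - K⁻¹ • ∇ L θ)]
  linarith [(inv_mul_le_iff₀ hK).mp h1]

theorem abs_inner_gradient_le_of_lipschitz (hL : Differentiable ℝ L) (hK : 0 < K)
    (hLip : ∀ a b : E, ‖∇ L a - ∇ L b‖ ≤ K * ‖a - b‖) (hL0 : ∀ θ, 0 ≤ L θ) (θ w : E) :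
    |⟪∇ L θ, w⟫| ≤ K * L θ + ‖w‖ ^ 2 / 2 := by
  have := sq_norm_gradient_le_of_lipschitz hL hK hLip hL0 θ
  nlinarith [abs_real_inner_le_norm (∇ L θ) w, sq_nonneg (‖∇ L θ‖ - ‖w‖)]

end LipschitzGradient

theorem integral_sgd_step_le {E X : Type*} [NormedAddCommGroup E] [InnerProductSpace ℝ E]
    [CompleteSpace E] [MeasurableSpace X] {P : Measure X} [IsProbabilityMeasure P]
    {L : E → ℝ} {g : X × E → E} {θ : E} {K c mu muG C_V M_V s η : ℝ}
    (hK : 0 ≤ K) (hmu : 0 ≤ mu) (hη0 : 0 ≤ η)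
    (hη : η * (K * (M_V * (1 + s) + muG ^ 2)) ≤ mu) (hPL : 2 * c * L θ ≤ ‖∇ L θ‖ ^ 2)
    (hgInt : Integrable (fun x => g (x, θ)) P) (hgSqInt : Integrable (fun x => ‖g (x, θ)‖ ^ 2) P)
    (hmom1 : mu * ‖∇ L θ‖ ^ 2 ≤ ⟪∇ L θ, ∫ x, g (x, θ) ∂P⟫)
    (hmom2 : ‖∫ x, g (x, θ) ∂P‖ ≤ muG * ‖∇ L θ‖)
    (hvar : ∫ x, ‖g (x, θ)‖ ^ 2 ∂P - ‖∫ x, g (x, θ) ∂P‖ ^ 2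
        ≤ C_V * s + M_V * (1 + s) * ‖∇ L θ‖ ^ 2) :
    ∫ x, (L θ - η * ⟪∇ L θ, g (x, θ)⟫ + K / 2 * η ^ 2 * ‖g (x, θ)‖ ^ 2) ∂P
      ≤ (1 - η * mu * c) * L θ + η ^ 2 * K * C_V * s / 2 := by
  have hinner : Integrable (fun x => ⟪∇ L θ, g (x, θ)⟫) P := hgInt.const_inner _
  have hfirst : Integrable (fun x => L θ - η * ⟪∇ L θ, g (x, θ)⟫) P :=
    (integrable_const _).sub (hinner.const_mul η)
  rw [integral_add hfirst (hgSqInt.const_mul _),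
    integral_sub (integrable_const _) (hinner.const_mul η), integral_const_mul, integral_const_mul,
    integral_inner hgInt, integral_const, probReal_univ, one_smul]
  have hmean_sq : ‖∫ x, g (x, θ) ∂P‖ ^ 2 ≤ muG ^ 2 * ‖∇ L θ‖ ^ 2 := by
    rw [← mul_pow]; exact pow_le_pow_left₀ (norm_nonneg _) hmom2 2
  have hsq_le : ∫ x, ‖g (x, θ)‖ ^ 2 ∂P
      ≤ C_V * s + (M_V * (1 + s) + muG ^ 2) * ‖∇ L θ‖ ^ 2 := by linarith
  -- the stepsize condition makes the second-order term at most half of the first-order gain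
  have hhalf : K / 2 * η ^ 2 * ((M_V * (1 + s) + muG ^ 2) * ‖∇ L θ‖ ^ 2)
      ≤ η * mu / 2 * ‖∇ L θ‖ ^ 2 := by
    have := mul_le_mul_of_nonneg_right hη (by positivity : 0 ≤ η * ‖∇ L θ‖ ^ 2 / 2)
    linarith
  have hPL' := mul_le_mul_of_nonneg_left hPL (by positivity : 0 ≤ η * mu / 2)
  have hmom1' := mul_le_mul_of_nonneg_left hmom1 hη0
  have hsq' := mul_le_mul_of_nonneg_left hsq_le (by positivity : 0 ≤ K / 2 * η ^ 2)
  linarith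

theorem ProbabilityTheory.iIndepFun.indepFun_of_measurable_iSup {Ω ι X γ : Type*}
    [MeasurableSpace Ω] {μ : Measure Ω} [mX : MeasurableSpace X] [MeasurableSpace γ]
    {Y : ι → Ω → X} (hY : iIndepFun Y μ) (hYm : ∀ i, Measurable (Y i)) {S : Set ι} {i : ι}
    (hi : i ∉ S) {Z : Ω → γ} (hZ : Measurable[⨆ j ∈ S, mX.comap (Y j)] Z) :
    IndepFun (Y i) Z μ := by
  have h := indep_iSup_of_disjoint (fun j => (hYm j).comap_le) hY.iIndep
    (Set.disjoint_singleton_left.mpr hi)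
  simp only [Set.mem_singleton_iff, iSup_iSup_eq_left] at h
  exact (IndepFun_iff_Indep _ _ _).mpr (indep_of_indep_of_le_right h hZ.comap_le)

namespace ProbabilityTheory.IndepFun

variable {Ω X E G : Type*} [MeasurableSpace Ω] [MeasurableSpace X] [MeasurableSpace E]
  [NormedAddCommGroup G] {μ : Measure Ω} [IsFiniteMeasure μ]
  {Y : Ω → X} {Z : Ω → E} {φ : X × E → G}

theorem integrable_prod_map (hYZ : IndepFun Y Z μ) (hY : Measurable Y) (hZ : Measurable Z)
    (hφ : StronglyMeasurable φ) (hint : Integrable (fun ω => φ (Y ω, Z ω)) μ) :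
    Integrable φ ((μ.map Y).prod (μ.map Z)) := by
  rw [← (indepFun_iff_map_prod_eq_prod_map_map hY.aemeasurable hZ.aemeasurable).mp hYZ]
  exact (integrable_map_measure hφ.aestronglyMeasurable (hY.prodMk hZ).aemeasurable).mpr hint

theorem integral_comp_eq_integral_integral [NormedSpace ℝ G] (hYZ : IndepFun Y Z μ)
    (hY : Measurable Y) (hZ : Measurable Z) (hφ : StronglyMeasurable φ)
    (hint : Integrable (fun ω => φ (Y ω, Z ω)) μ) :
    ∫ ω, φ (Y ω, Z ω) ∂μ = ∫ ω, ∫ x, φ (x, Z ω) ∂(μ.map Y) ∂μ := by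
  calc ∫ ω, φ (Y ω, Z ω) ∂μ = ∫ p, φ p ∂(μ.map fun ω => (Y ω, Z ω)) :=
        (integral_map (hY.prodMk hZ).aemeasurable hφ.aestronglyMeasurable).symm
    _ = ∫ p, φ p ∂((μ.map Y).prod (μ.map Z)) := by
        rw [(indepFun_iff_map_prod_eq_prod_map_map hY.aemeasurable hZ.aemeasurable).mp hYZ]
    _ = ∫ z, ∫ x, φ (x, z) ∂(μ.map Y) ∂(μ.map Z) :=
        integral_prod_symm φ (hYZ.integrable_prod_map hY hZ hφ hint)
    _ = ∫ ω, ∫ x, φ (x, Z ω) ∂(μ.map Y) ∂μ :=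
        integral_map hZ.aemeasurable hφ.integral_prod_left'.aestronglyMeasurable

theorem integral_comp_le_of_integral_le {φ : X × E → ℝ} {h : E → ℝ} (hYZ : IndepFun Y Z μ)
    (hY : Measurable Y) (hZ : Measurable Z) (hφ : StronglyMeasurable φ)
    (hint : Integrable (fun ω => φ (Y ω, Z ω)) μ) (hh : Integrable (fun ω => h (Z ω)) μ)
    (hle : ∀ z, ∫ x, φ (x, z) ∂(μ.map Y) ≤ h z) :
    ∫ ω, φ (Y ω, Z ω) ∂μ ≤ ∫ ω, h (Z ω) ∂μ := by
  have hint' : Integrable (fun z => ∫ x, φ (x, z) ∂(μ.map Y)) (μ.map Z) :=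
    (hYZ.integrable_prod_map hY hZ hφ hint).integral_prod_right
  rw [hYZ.integral_comp_eq_integral_integral hY hZ hφ hint]
  exact integral_mono
    ((integrable_map_measure hint'.aestronglyMeasurable hZ.aemeasurable).mp hint') hh
    fun ω => hle (Z ω)

end ProbabilityTheory.IndepFun

theorem measurable_past_of_recursion {X E : Type*} [mX : MeasurableSpace X] [MeasurableSpace E]
    {T : X × E → E} (hT : Measurable T) {θ₁ : E} {θ : (ℕ → X) → ℕ → E}
    (h1 : ∀ ω, θ ω 1 = θ₁) (hsucc : ∀ ω, ∀ i ≥ 1, θ ω (i + 1) = T (ω i, θ ω i)) {i : ℕ}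
    (hi : 1 ≤ i) : Measurable[⨆ j ∈ Set.Iio i, mX.comap (fun ω : ℕ → X => ω j)] (θ · i) := by
  induction i, hi using Nat.le_induction with
  | base => simp only [h1]; exact measurable_const
  | succ i hi ih =>
    have hω : Measurable[⨆ j ∈ Set.Iio (i + 1), mX.comap (fun ω : ℕ → X => ω j)] (· i) :=
      (comap_measurable _).mono (le_iSup₂ (f := fun j _ => mX.comap (fun ω : ℕ → X => ω j)) i
        (Nat.lt_succ_self i)) le_rfl
    have hθ := ih.mono (biSup_mono fun j hj => Nat.lt_succ_of_lt hj) le_rfl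
    simp only [hsucc _ i hi]
    exact hT.comp (hω.prodMk hθ)

theorem integral_sgd_succ_le {E X : Type*} [NormedAddCommGroup E] [InnerProductSpace ℝ E]
    [CompleteSpace E] [SecondCountableTopology E] [MeasurableSpace E] [BorelSpace E]
    [MeasurableSpace X] {P : Measure X} {Pseq : Measure (ℕ → X)} [IsProbabilityMeasure Pseq]
    {L : E → ℝ} {g : X × E → E} {K η r b : ℝ} {θ₁ : E} {θ : (ℕ → X) → ℕ → E}
    (hL0 : ∀ θ, 0 ≤ L θ) (hL : Differentiable ℝ L) (hK : 0 < K)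
    (hLip : ∀ a b : E, ‖∇ L a - ∇ L b‖ ≤ K * ‖a - b‖) (hg : Measurable g)
    (hmap : ∀ i, Pseq.map (fun ω => ω i) = P) (hiid : iIndepFun (fun i (ω : ℕ → X) => ω i) Pseq)
    (h1 : ∀ ω, θ ω 1 = θ₁) (hsucc : ∀ ω, ∀ i ≥ 1, θ ω (i + 1) = θ ω i - η • g (ω i, θ ω i))
    (hLint : ∀ i, Integrable (fun ω => L (θ ω i)) Pseq)
    (hgint : ∀ i, Integrable (fun ω => ‖g (ω i, θ ω i)‖ ^ 2) Pseq)
    (hstep : ∀ θ, ∫ x, (L θ - η * ⟪∇ L θ, g (x, θ)⟫ + K / 2 * η ^ 2 * ‖g (x, θ)‖ ^ 2) ∂P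
      ≤ r * L θ + b)
    {i : ℕ} (hi : 1 ≤ i) :
    ∫ ω, L (θ ω (i + 1)) ∂Pseq ≤ r * ∫ ω, L (θ ω i) ∂Pseq + b := by
  set φ : X × E → ℝ := fun p => L p.2 - η * ⟪∇ L p.2, g p⟫ + K / 2 * η ^ 2 * ‖g p‖ ^ 2
  have hpast := measurable_past_of_recursion (T := fun p : X × E => p.2 - η • g p)
    (measurable_snd.sub (hg.const_smul η)) h1 hsucc hi
  have hind : IndepFun (fun ω => ω i) (θ · i) Pseq :=
    hiid.indepFun_of_measurable_iSup measurable_pi_apply Set.self_notMem_Iio hpast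
  have hθ : Measurable (θ · i) :=
    hpast.mono (iSup₂_le fun j _ => (measurable_pi_apply j).comap_le) le_rfl
  have hgrad : Measurable (∇ L) := (continuous_of_norm_sub_le hLip).measurable
  have hφ : Measurable φ :=
    ((hL.continuous.measurable.comp measurable_snd).sub
      (((hgrad.comp measurable_snd).inner hg).const_mul η)).add
      ((hg.norm.pow_const 2).const_mul _)
  have hinner : Integrable (fun ω => ⟪∇ L (θ ω i), g (ω i, θ ω i)⟫) Pseq :=
    Integrable.mono' (((hLint i).const_mul K).add ((hgint i).div_const 2))
      ((hgrad.comp hθ).inner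
        (hg.comp ((measurable_pi_apply i).prodMk hθ))).aestronglyMeasurable
      (ae_of_all _ fun ω => abs_inner_gradient_le_of_lipschitz hL hK hLip hL0 _ _)
  have hφint : Integrable (fun ω => φ (ω i, θ ω i)) Pseq :=
    ((hLint i).sub (hinner.const_mul η)).add ((hgint i).const_mul _)
  have hdescent : ∀ ω, L (θ ω (i + 1)) ≤ φ (ω i, θ ω i) := fun ω => by
    have h := le_add_inner_gradient_add_of_lipschitz hL hLip (θ ω i)
      (θ ω i - η • g (ω i, θ ω i))
    rw [sub_sub_cancel_left, inner_neg_right, real_inner_smul_right, norm_neg,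
      norm_smul, mul_pow, Real.norm_eq_abs, sq_abs] at h
    rw [hsucc ω i hi]
    simp only [φ]
    linarith
  calc ∫ ω, L (θ ω (i + 1)) ∂Pseq ≤ ∫ ω, φ (ω i, θ ω i) ∂Pseq :=
        integral_mono (hLint (i + 1)) hφint hdescent
    _ ≤ ∫ ω, r * L (θ ω i) + b ∂Pseq :=
        hind.integral_comp_le_of_integral_le (measurable_pi_apply i) hθ hφ.stronglyMeasurable
          hφint (((hLint i).const_mul r).add (integrable_const b)) (by rw [hmap i]; exact hstep)
    _ = r * ∫ ω, L (θ ω i) ∂Pseq + b := by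
        rw [integral_add ((hLint i).const_mul r) (integrable_const b), integral_const_mul,
          integral_const, probReal_univ, one_smul]

theorem sq_norm_sub_le_of_stability {V W₁ W₂ : Type*} [SeminormedAddCommGroup V]
    [SeminormedAddCommGroup W₁] [SeminormedAddCommGroup W₂] [Module ℝ V] [Module ℝ W₁]
    [Module ℝ W₂] (A : V →ₗ[ℝ] W₁) (B : V →ₗ[ℝ] W₂) {C₁ : ℝ} (hC₁ : 0 < C₁)
    (hstab : ∀ u, C₁ * ‖u‖ ≤ ‖A u‖ + ‖B u‖) {u w : V} {f : W₁} {g : W₂} (hA : A u = f)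
    (hB : B u = g) : ‖u - w‖ ^ 2 ≤ 2 / C₁ ^ 2 * (‖A w - f‖ ^ 2 + ‖B w - g‖ ^ 2) := by
  have h := hstab (u - w)
  rw [map_sub, map_sub, hA, hB, norm_sub_rev f, norm_sub_rev g] at h
  rw [div_mul_eq_mul_div, le_div_iff₀ (by positivity)]
  nlinarith [sq_nonneg (‖A w - f‖ - ‖B w - g‖), mul_nonneg hC₁.le (norm_nonneg (u - w))]

theorem le_div_add_pow_mul_of_le_mul_add {a : ℕ → ℝ} {r b : ℝ} (hr0 : 0 ≤ r) (hr1 : r ≠ 1)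
    (h : ∀ n, a (n + 1) ≤ r * a n + b) (n : ℕ) :
    a n ≤ b / (1 - r) + r ^ n * (a 0 - b / (1 - r)) := by
  have hfix : r * (b / (1 - r)) + b = b / (1 - r) := by
    field_simp [sub_ne_zero.mpr hr1.symm]; ring
  induction n with
  | zero => simp
  | succ n ih =>
    calc a (n + 1) ≤ r * a n + b := h n
      _ ≤ r * (b / (1 - r) + r ^ n * (a 0 - b / (1 - r))) + b := by gcongr
      _ = b / (1 - r) + r ^ (n + 1) * (a 0 - b / (1 - r)) := by linear_combination hfix

theorem Filter.limsup_le_of_eventually_le_of_tendsto {ι α : Type*}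
    [ConditionallyCompleteLinearOrder α] [TopologicalSpace α] [OrderTopology α]
    {f : Filter ι} [f.NeBot] {u w : ι → α} {T : α} (hu : IsBoundedUnder (· ≥ ·) f u)
    (huw : u ≤ᶠ[f] w) (hw : Tendsto w f (nhds T)) : limsup u f ≤ T :=
  (limsup_le_limsup huw hu.isCoboundedUnder_le hw.isBoundedUnder_le).trans_eq hw.limsup_eq

theorem limsup_le_of_le_of_le_mul_add {a e : ℕ → ℝ} {r b α β : ℝ} (hr0 : 0 ≤ r) (hr1 : r < 1)
    (hrec : ∀ᶠ n in atTop, a (n + 1) ≤ r * a n + b) (he : ∀ n, 0 ≤ e n) (hα : 0 ≤ α)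
    (hea : ∀ n, e n ≤ α * (a n + β)) : limsup e atTop ≤ α * (b / (1 - r) + β) := by
  obtain ⟨N, hN⟩ := eventually_atTop.mp hrec
  have hunroll := le_div_add_pow_mul_of_le_mul_add (a := fun k => a (k + N)) hr0 hr1.ne
    fun k => by simpa only [add_right_comm] using hN (k + N) (Nat.le_add_left N k)
  have hlim : Tendsto (fun k => α * (b / (1 - r) + r ^ k * (a (0 + N) - b / (1 - r)) + β))
      atTop (nhds (α * (b / (1 - r) + β))) := by
    simpa using (((tendsto_pow_atTop_nhds_zero_of_lt_one hr0 hr1).mul_const _).const_add _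
      |>.add_const β).const_mul α
  rw [← limsup_nat_add e N]
  exact limsup_le_of_eventually_le_of_tendsto
    (isBoundedUnder_of_eventually_ge (.of_forall fun k => he _))
    (.of_forall fun k => (hea _).trans (by gcongr; exact hunroll k)) hlim

theorem mul_mul_le_one_of_le_sqrt_div_mul {K c mu muG D η : ℝ} (hc : 0 < c) (hmu : 0 < mu)
    (hmu_le : mu ≤ Real.sqrt (K / c) * muG) (hD : muG ^ 2 ≤ D) (hK : 0 ≤ K) (hη0 : 0 ≤ η)
    (hη : η * (K * D) ≤ mu) : η * mu * c ≤ 1 := by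
  have hsq : c * mu ^ 2 ≤ K * muG ^ 2 := by
    have h := pow_le_pow_left₀ hmu.le hmu_le 2
    rw [mul_pow, Real.sq_sqrt (by positivity)] at h
    calc c * mu ^ 2 ≤ c * (K / c * muG ^ 2) := by gcongr
      _ = K * muG ^ 2 := by field_simp
  have : η * (c * mu ^ 2) ≤ η * (K * D) :=
    mul_le_mul_of_nonneg_left (hsq.trans (mul_le_mul_of_nonneg_left hD hK)) hη0
  nlinarith

theorem pinn_sgd_error_limsup_general
    -- Parameter space: finite-dimensional real inner product space
    {E : Type*} [NormedAddCommGroup E] [InnerProductSpace ℝ E] [FiniteDimensional ℝ E] [MeasurableSpace E] [BorelSpace E]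
    -- Loss function: nonnegative, differentiable, Lipschitz gradient, 2c-PL* condition
    (L : E → ℝ) (hL0 : ∀ θ : E, 0 ≤ L θ) (hLdiff : Differentiable ℝ L)
    (K : ℝ) (hK : 0 < K)
    (hLip : ∀ θ₁ θ₂ : E, ‖∇ L θ₁ - ∇ L θ₂‖ ≤ K * ‖θ₁ - θ₂‖)
    (c : ℝ) (hc : 0 < c) (hPL : ∀ θ : E, 2 * c * L θ ≤ ‖∇ L θ‖ ^ 2)
    -- Stochastic gradient on a probability space
    {X : Type*} [MeasurableSpace X] (P : Measure X) [IsProbabilityMeasure P]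
    (g : X × E → E) (hgmeas : Measurable g)
    (hgInt : ∀ θ : E, Integrable (fun x => g (x, θ)) P)
    (hgSqInt : ∀ θ : E, Integrable (fun x => ‖g (x, θ)‖ ^ 2) P)
    -- constants
    (mu muG C_V M_V s : ℝ) (hmu : 0 < mu) (hmuG : 0 < muG)
    (hmu_le : mu ≤ Real.sqrt (K / c) * muG)
    (hMV : 0 ≤ M_V) (hs : 0 ≤ s)
    -- moment assumptions (i), (ii), (iii)
    (hmom1 : ∀ θ : E, mu * ‖∇ L θ‖ ^ 2 ≤ ⟪∇ L θ, ∫ x, g (x, θ) ∂P⟫)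
    (hmom2 : ∀ θ : E, ‖∫ x, g (x, θ) ∂P‖ ≤ muG * ‖∇ L θ‖)
    (hvar : ∀ θ : E, ∫ x, ‖g (x, θ)‖ ^ 2 ∂P - ‖∫ x, g (x, θ) ∂P‖ ^ 2
        ≤ C_V * s + M_V * (1 + s) * ‖∇ L θ‖ ^ 2)
    -- product measure on the sequence space with i.i.d. coordinates of law P
    (Pseq : Measure (ℕ → X)) [IsProbabilityMeasure Pseq]
    (hmap : ∀ i : ℕ, Pseq.map (fun ω => ω i) = P)
    (hiid : iIndepFun
      (fun (i : ℕ) (ω : ℕ → X) => ω i) Pseq)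
    -- fixed admissible stepsize and SGD iterates
    (η : ℝ) (hη0 : 0 < η) (hη : η ≤ mu / (K * (M_V * (1 + s) + muG ^ 2)))
    (θ₁ : E) (θiter : (ℕ → X) → ℕ → E)
    (hiter1 : ∀ ω : ℕ → X, θiter ω 1 = θ₁)
    (hiter : ∀ ω : ℕ → X, ∀ i ≥ 1, θiter ω (i + 1) = θiter ω i - η • g (ω i, θiter ω i))
    (hLint : ∀ i : ℕ, Integrable (fun ω => L (θiter ω i)) Pseq)
    (hgiter : ∀ i : ℕ, Integrable (fun ω => ‖g (ω i, θiter ω i)‖ ^ 2) Pseq)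
    -- PDE side: L² spaces, linear operators, stability bound and exact solution
    {Ω : Type*} [MeasurableSpace Ω] (μΩ : Measure Ω)
    {Γ : Type*} [MeasurableSpace Γ] (νΓ : Measure Γ)
    (A : Lp ℝ 2 μΩ →ₗ[ℝ] Lp ℝ 2 μΩ) (B : Lp ℝ 2 μΩ →ₗ[ℝ] Lp ℝ 2 νΓ)
    (C₁ : ℝ) (hC₁ : 0 < C₁)
    (hstab : ∀ u : Lp ℝ 2 μΩ, C₁ * ‖u‖ ≤ ‖A u‖ + ‖B u‖)
    (f : Lp ℝ 2 μΩ) (gb : Lp ℝ 2 νΓ) (ustar : Lp ℝ 2 μΩ)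
    (hA : A ustar = f) (hB : B ustar = gb)
    -- parameter-to-predicted-solution map, controlled by the loss up to error ε
    (v : E → Lp ℝ 2 μΩ) (ε : ℝ)
    (hloss : ∀ θ : E, ‖A (v θ) - f‖ ^ 2 + ‖B (v θ) - gb‖ ^ 2 ≤ L θ + ε)
    (hvint : ∀ i : ℕ, Integrable (fun ω => ‖ustar - v (θiter ω i)‖ ^ 2) Pseq) :
    limsup (fun i => ∫ ω, ‖ustar - v (θiter ω i)‖ ^ 2 ∂Pseq) atTop ≤
      2 / C₁ ^ 2 * (η * K * C_V * s / (2 * c * mu) + ε) := by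
  set D := M_V * (1 + s) + muG ^ 2
  have hD : muG ^ 2 ≤ D := le_add_of_nonneg_left (mul_nonneg hMV (by linarith))
  have hηKD : η * (K * D) ≤ mu := (le_div_iff₀ (by positivity)).mp hη
  have hηmc := mul_mul_le_one_of_le_sqrt_div_mul hc hmu hmu_le hD hK.le hη0.le hηKD
  have hrec : ∀ᶠ i in atTop, ∫ ω, L (θiter ω (i + 1)) ∂Pseq
      ≤ (1 - η * mu * c) * ∫ ω, L (θiter ω i) ∂Pseq + η ^ 2 * K * C_V * s / 2 := by
    filter_upwards [eventually_ge_atTop 1] with i hi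
    exact integral_sgd_succ_le hL0 hLdiff hK hLip hgmeas hmap hiid hiter1 hiter hLint hgiter
      (fun θ => integral_sgd_step_le hK.le hmu.le hη0.le hηKD (hPL θ) (hgInt θ) (hgSqInt θ)
        (hmom1 θ) (hmom2 θ) (hvar θ)) hi
  have herr : ∀ i, ∫ ω, ‖ustar - v (θiter ω i)‖ ^ 2 ∂Pseq
      ≤ 2 / C₁ ^ 2 * (∫ ω, L (θiter ω i) ∂Pseq + ε) := fun i => by
    calc _ ≤ ∫ ω, 2 / C₁ ^ 2 * (L (θiter ω i) + ε) ∂Pseq :=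
          integral_mono (hvint i) (((hLint i).add (integrable_const ε)).const_mul _) fun ω =>
            (sq_norm_sub_le_of_stability A B hC₁ hstab hA hB).trans
              (mul_le_mul_of_nonneg_left (hloss _) (by positivity))
      _ = _ := by
          rw [integral_const_mul, integral_add (hLint i) (integrable_const ε), integral_const,
            probReal_univ, one_smul]
  have hfix : η ^ 2 * K * C_V * s / 2 / (1 - (1 - η * mu * c))
      = η * K * C_V * s / (2 * c * mu) := by
    rw [sub_sub_cancel]; field_simp
  rw [← hfix]
  exact limsup_le_of_le_of_le_mul_add (sub_nonneg.mpr hηmc) (sub_lt_self 1 (by positivity)) hrec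
    (fun i => integral_nonneg fun ω => by positivity) (by positivity) herr

theorem pinn_sgd_error_limsup
    -- Parameter space: finite-dimensional real inner product space
    {E : Type*} [NormedAddCommGroup E] [InnerProductSpace ℝ E] [FiniteDimensional ℝ E] [MeasurableSpace E] [BorelSpace E]
    -- Loss function: nonnegative, differentiable, Lipschitz gradient, 2c-PL* condition
    (L : E → ℝ) (hL0 : ∀ θ : E, 0 ≤ L θ) (hLdiff : Differentiable ℝ L)
    (K : ℝ) (hK : 0 < K)
    (hLip : ∀ θ₁ θ₂ : E, ‖∇ L θ₁ - ∇ L θ₂‖ ≤ K * ‖θ₁ - θ₂‖)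
    (c : ℝ) (hc : 0 < c) (hPL : ∀ θ : E, 2 * c * L θ ≤ ‖∇ L θ‖ ^ 2)
    -- Stochastic gradient on a probability space
    {X : Type*} [MeasurableSpace X] (P : Measure X) [IsProbabilityMeasure P]
    (g : X × E → E) (hgmeas : Measurable g)
    (hgInt : ∀ θ : E, Integrable (fun x => g (x, θ)) P)
    (hgSqInt : ∀ θ : E, Integrable (fun x => ‖g (x, θ)‖ ^ 2) P)
    -- constants
    (mu muG C_V M_V s : ℝ) (hmu : 0 < mu) (hmuG : 0 < muG)
    (hmu_le : mu ≤ Real.sqrt (K / c) * muG)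
    (hCV : 0 ≤ C_V) (hMV : 0 ≤ M_V) (hs : 0 ≤ s)
    -- moment assumptions (i), (ii), (iii)
    (hmom1 : ∀ θ : E, mu * ‖∇ L θ‖ ^ 2 ≤ ⟪∇ L θ, ∫ x, g (x, θ) ∂P⟫)
    (hmom2 : ∀ θ : E, ‖∫ x, g (x, θ) ∂P‖ ≤ muG * ‖∇ L θ‖)
    (hvar : ∀ θ : E, ∫ x, ‖g (x, θ)‖ ^ 2 ∂P - ‖∫ x, g (x, θ) ∂P‖ ^ 2
        ≤ C_V * s + M_V * (1 + s) * ‖∇ L θ‖ ^ 2)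
    -- product measure on the sequence space with i.i.d. coordinates of law P
    (Pseq : Measure (ℕ → X)) [IsProbabilityMeasure Pseq]
    (hmap : ∀ i : ℕ, Pseq.map (fun ω => ω i) = P)
    (hiid : iIndepFun
      (fun (i : ℕ) (ω : ℕ → X) => ω i) Pseq)
    -- fixed admissible stepsize and SGD iterates
    (η : ℝ) (hη0 : 0 < η) (hη : η ≤ mu / (K * (M_V * (1 + s) + muG ^ 2)))
    (θ₁ : E) (θiter : (ℕ → X) → ℕ → E)
    (hiter1 : ∀ ω : ℕ → X, θiter ω 1 = θ₁)
    (hiter : ∀ ω : ℕ → X, ∀ i ≥ 1, θiter ω (i + 1) = θiter ω i - η • g (ω i, θiter ω i))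
    (hLint : ∀ i : ℕ, Integrable (fun ω => L (θiter ω i)) Pseq)
    (hgiter : ∀ i : ℕ, Integrable (fun ω => ‖g (ω i, θiter ω i)‖ ^ 2) Pseq)
    -- PDE side: L² spaces, linear operators, stability bound and exact solution
    {Ω : Type*} [MeasurableSpace Ω] (μΩ : Measure Ω)
    {Γ : Type*} [MeasurableSpace Γ] (νΓ : Measure Γ)
    (A : Lp ℝ 2 μΩ →ₗ[ℝ] Lp ℝ 2 μΩ) (B : Lp ℝ 2 μΩ →ₗ[ℝ] Lp ℝ 2 νΓ)
    (C₁ : ℝ) (hC₁ : 0 < C₁)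
    (hstab : ∀ u : Lp ℝ 2 μΩ, C₁ * ‖u‖ ≤ ‖A u‖ + ‖B u‖)
    (f : Lp ℝ 2 μΩ) (gb : Lp ℝ 2 νΓ) (ustar : Lp ℝ 2 μΩ)
    (hA : A ustar = f) (hB : B ustar = gb)
    -- parameter-to-predicted-solution map, controlled by the loss up to error ε
    (v : E → Lp ℝ 2 μΩ) (ε : ℝ) (hε : 0 ≤ ε)
    (hloss : ∀ θ : E, ‖A (v θ) - f‖ ^ 2 + ‖B (v θ) - gb‖ ^ 2 ≤ L θ + ε)
    (hvint : ∀ i : ℕ, Integrable (fun ω => ‖ustar - v (θiter ω i)‖ ^ 2) Pseq) :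
    limsup (fun i => ∫ ω, ‖ustar - v (θiter ω i)‖ ^ 2 ∂Pseq) atTop ≤
      2 / C₁ ^ 2 * (η * K * C_V * s / (2 * c * mu) + ε) :=
  pinn_sgd_error_limsup_general L hL0 hLdiff K hK hLip c hc hPL P g hgmeas hgInt hgSqInt mu muG C_V
    M_V s hmu hmuG hmu_le hMV hs hmom1 hmom2 hvar Pseq hmap hiid η hη0 hη θ₁ θiter hiter1 hiter
    hLint hgiter μΩ νΓ A B C₁ hC₁ hstab f gb ustar hA hB v ε hloss hvint
end
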